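/- arXiv:1901.11158 — 2 statements merged into one kernel-verified Lean document; each statement's English description precedes it below -/
import Mathlib

section
/- Let A ∈ ℝ^{m×n} satisfy the restricted isometry property of order 2s with constant δ < 1/√2, i.e., (1−δ)‖z‖₂² ≤ ‖Az‖₂² ≤ (1+δ)‖z‖₂² holds for all 2s-sparse z ∈ ℝⁿ. Then for every s-sparse vector v ∈ ℝⁿ the source condition holds: there exists w ∈ ℝ^m such that (Aᵀw)_i = sign(v_i) for every i ∈ supp(v) and |(Aᵀw)_i| < 1 for every i ∉ supp(v); moreover A restricted to the subspace spanned by the standard basis vectors e_i with i ∈ supp(v) is injective. -/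
/-
Null space property (Cai–Zhang). Let `h ≠ 0` lie in the kernel of `A`, let `T₀` index its `s`
largest entries, `x = h` on `T₀` and `u = h - x`. If `‖h_T‖₁ ≥ ‖h_{Tᶜ}‖₁` for some `|T| ≤ s`, then
`‖u‖_∞ ≤ θ` and `‖u‖₁ ≤ sθ` with `θ = ‖x‖₁ / s`, so `u` is a convex combination of `s`-sparse
vectors `y` with the same bounds and support inside that of `u`. For each such `y`, the lower RIP
bound at `x + μy` against the upper one at `(2μ-1)x + μy` gives an inequality that is affine in `y`;
averaging it over the combination evaluates it at `u`, where `A(x + u) = 0`, and forces `x = 0`.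

Certificate. By the null space property and compactness, `h ↦ -⟨sign v, h_T⟩` is bounded on
`ker A` by `κ‖h_{Tᶜ}‖₁` for some `κ < 1`; a Hahn–Banach extension to `ℝⁿ`, corrected by `sign v`
on `T`, is orthogonal to `ker A`, hence of the form `Aᵀw`. Injectivity on the support is the lower
RIP bound.
-/

open Matrix

/-- `z` has at most `s` nonzero entries. -/
def IsSparse {n : ℕ} (s : ℕ) (z : Fin n → ℝ) : Prop :=
  ∃ T : Finset (Fin n), T.card ≤ s ∧ ∀ i ∉ T, z i = 0

open Finset

section Sparse

variable {n : ℕ}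

lemma isSparse_iff {s : ℕ} {z : Fin n → ℝ} : IsSparse s z ↔ #{i | z i ≠ 0} ≤ s :=
  ⟨fun ⟨T, hT, hz⟩ => (card_le_card fun i hi => by_contra fun hiT => by simp_all).trans hT,
    fun h => ⟨_, h, fun i hi => by simpa using hi⟩⟩

lemma IsSparse.add {s t : ℕ} {x y : Fin n → ℝ} (hx : IsSparse s x) (hy : IsSparse t y) :
    IsSparse (s + t) (x + y) := by
  obtain ⟨S, hS, hxS⟩ := hx
  obtain ⟨T, hT, hyT⟩ := hy
  refine ⟨S ∪ T, (card_union_le S T).trans (add_le_add hS hT), fun i hi => ?_⟩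
  rw [mem_union, not_or] at hi
  simp [hxS i hi.1, hyT i hi.2]

lemma IsSparse.smul {s : ℕ} {x : Fin n → ℝ} (hx : IsSparse s x) (c : ℝ) : IsSparse s (c • x) := by
  obtain ⟨S, hS, hxS⟩ := hx
  exact ⟨S, hS, fun i hi => by simp [hxS i hi]⟩

lemma IsSparse.sum_sq_le {s : ℕ} {y : Fin n → ℝ} {θ : ℝ} (hy : IsSparse s y) (hθ : ∀ i, |y i| ≤ θ) :
    ∑ i, y i ^ 2 ≤ s * θ ^ 2 := by
  obtain ⟨T, hT, hyT⟩ := hy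
  calc ∑ i, y i ^ 2 = ∑ i ∈ T, y i ^ 2 :=
        (sum_subset (subset_univ T) fun i _ hi => by simp [hyT i hi]).symm
    _ ≤ #T • θ ^ 2 := sum_le_card_nsmul _ _ _ fun i _ => by
        rw [← sq_abs]; exact pow_le_pow_left₀ (abs_nonneg _) (hθ i) 2
    _ ≤ s * θ ^ 2 := by rw [nsmul_eq_mul]; gcongr

end Sparse

section SparseRepresentation

variable {n : ℕ}

lemma abs_add_mul_sign {a : ℝ} (ha : a ≠ 0) (t : ℝ) : |a + t * Real.sign a| = |(|a| + t)| := by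
  rcases ha.lt_or_gt with h | h
  · rw [Real.sign_of_neg h, abs_of_neg h, ← abs_neg]
    ring_nf
  · rw [Real.sign_of_pos h, abs_of_pos h, mul_one]

noncomputable def unsaturatedSupport (θ : ℝ) (u : Fin n → ℝ) : Finset (Fin n) :=
  {k | 0 < |u k| ∧ |u k| < θ}

lemma mem_unsaturatedSupport {θ : ℝ} {u : Fin n → ℝ} {k : Fin n} :
    k ∈ unsaturatedSupport θ u ↔ 0 < |u k| ∧ |u k| < θ := by
  simp [unsaturatedSupport]

noncomputable def transfer (u : Fin n → ℝ) (i j : Fin n) (t : ℝ) : Fin n → ℝ :=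
  u + t • (Pi.single i (Real.sign (u i)) - Pi.single j (Real.sign (u j)))

lemma abs_transfer_apply {u : Fin n → ℝ} {i j : Fin n} (hij : i ≠ j) (hi : u i ≠ 0) (hj : u j ≠ 0)
    {t : ℝ} (ht : 0 ≤ t) (htj : t ≤ |u j|) (k : Fin n) :
    |transfer u i j t k| = if k = i then |u i| + t else if k = j then |u j| - t else |u k| := by
  split_ifs with hki hkj
  · subst hki
    simpa [transfer, hij, abs_of_nonneg (by positivity : 0 ≤ |u k| + t)] using abs_add_mul_sign hi t
  · subst hkj
    have h := abs_add_mul_sign hj (-t)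
    rw [← sub_eq_add_neg, abs_of_nonneg (sub_nonneg.2 htj)] at h
    simpa [transfer, hij.symm, sub_eq_add_neg, mul_comm t] using h
  · simp [transfer, hki, hkj]

lemma sum_abs_transfer {u : Fin n → ℝ} {i j : Fin n} (hij : i ≠ j) (hi : u i ≠ 0) (hj : u j ≠ 0)
    {t : ℝ} (ht : 0 ≤ t) (htj : t ≤ |u j|) : ∑ k, |transfer u i j t k| = ∑ k, |u k| := by
  have hk : ∀ k, |transfer u i j t k| =
      |u k| + (if k = i then t else 0) - (if k = j then t else 0) := fun k => by
      rw [abs_transfer_apply hij hi hj ht htj]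
      split_ifs <;> simp_all
  simp_rw [hk, sum_sub_distrib, sum_add_distrib, sum_ite_eq']
  simp

lemma card_unsaturatedSupport_transfer_lt {θ : ℝ} {u : Fin n → ℝ} {i j : Fin n} (hij : i ≠ j)
    (hi : i ∈ unsaturatedSupport θ u) (hj : j ∈ unsaturatedSupport θ u) {t : ℝ} (ht : 0 ≤ t)
    (htj : t ≤ |u j|) (hsat : |u i| + t = θ ∨ t = |u j|) :
    #(unsaturatedSupport θ (transfer u i j t)) < #(unsaturatedSupport θ u) := by
  rw [mem_unsaturatedSupport] at hi hj
  have habs := abs_transfer_apply hij (abs_pos.1 hi.1) (abs_pos.1 hj.1) ht htj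
  have hsub : unsaturatedSupport θ (transfer u i j t) ⊆ unsaturatedSupport θ u := by
    intro k hk
    rw [mem_unsaturatedSupport] at hk ⊢
    by_cases hki : k = i
    · exact hki ▸ hi
    by_cases hkj : k = j
    · exact hkj ▸ hj
    rwa [habs, if_neg hki, if_neg hkj] at hk
  refine card_lt_card ((ssubset_iff_of_subset hsub).2 ?_)
  rcases hsat with h | h
  · refine ⟨i, mem_unsaturatedSupport.2 hi, fun hw => ?_⟩
    rw [mem_unsaturatedSupport, habs, if_pos rfl] at hw
    linarith [hw.2]
  · refine ⟨j, mem_unsaturatedSupport.2 hj, fun hw => ?_⟩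
    rw [mem_unsaturatedSupport, habs, if_neg hij.symm, if_pos rfl] at hw
    linarith [hw.1]

lemma exists_transfer {θ : ℝ} {u : Fin n → ℝ} (hu : ∀ k, |u k| ≤ θ) {i j : Fin n} (hij : i ≠ j)
    (hi : i ∈ unsaturatedSupport θ u) (hj : j ∈ unsaturatedSupport θ u) :
    ∃ t > 0, (∀ k, |transfer u i j t k| ≤ θ) ∧ ∑ k, |transfer u i j t k| = ∑ k, |u k| ∧
      (∀ k, u k = 0 → transfer u i j t k = 0) ∧
      #(unsaturatedSupport θ (transfer u i j t)) < #(unsaturatedSupport θ u) := by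
  have hi' := mem_unsaturatedSupport.1 hi
  have hj' := mem_unsaturatedSupport.1 hj
  set t := min (θ - |u i|) |u j|
  have ht : 0 < t := lt_min (sub_pos.2 hi'.2) hj'.1
  have hti : |u i| + t ≤ θ := by linarith [min_le_left (θ - |u i|) |u j|]
  have htj : t ≤ |u j| := min_le_right _ _
  have habs := abs_transfer_apply hij (abs_pos.1 hi'.1) (abs_pos.1 hj'.1) ht.le htj
  refine ⟨t, ht, fun k => ?_, sum_abs_transfer hij (abs_pos.1 hi'.1) (abs_pos.1 hj'.1) ht.le htj,
    fun k hk => ?_, card_unsaturatedSupport_transfer_lt hij hi hj ht.le htj ?_⟩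
  · rw [habs]
    split_ifs
    · exact hti
    · linarith [hu j]
    · exact hu k
  · have hki : k ≠ i := by rintro rfl; simp [hk] at hi'
    have hkj : k ≠ j := by rintro rfl; simp [hk] at hj'
    have hwk := habs k
    rw [if_neg hki, if_neg hkj, hk, abs_zero] at hwk
    exact abs_eq_zero.1 hwk
  · rcases min_choice (θ - |u i|) |u j| with h | h
    · exact Or.inl (by linarith)
    · exact Or.inr h

lemma one_lt_card_unsaturatedSupport {s : ℕ} {θ : ℝ} {u : Fin n → ℝ} (hu : ∀ k, |u k| ≤ θ)
    (hu1 : ∑ k, |u k| ≤ s * θ) (hs : ¬ IsSparse s u) : 1 < #(unsaturatedSupport θ u) := by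
  rw [isSparse_iff, not_le] at hs
  set S : Finset (Fin n) := {k | u k ≠ 0}
  have hmemS : ∀ k, k ∈ S ↔ 0 < |u k| := by simp [S]
  by_contra hU
  push Not at hU
  obtain ⟨k₀, hk₀S, hk₀⟩ : ∃ k₀ ∈ S, ∀ k ∈ S, k ≠ k₀ → θ ≤ |u k| := by
    rcases (unsaturatedSupport θ u).eq_empty_or_nonempty with hU0 | ⟨a, ha⟩
    · obtain ⟨k₀, hk₀⟩ := card_pos.1 (by omega : 0 < #S)
      refine ⟨k₀, hk₀, fun k hk _ => not_lt.1 fun hlt => ?_⟩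
      simpa [hU0] using mem_unsaturatedSupport.2 ⟨(hmemS k).1 hk, hlt⟩
    · refine ⟨a, (hmemS a).2 (mem_unsaturatedSupport.1 ha).1,
        fun k hk hka => not_lt.1 fun hlt => ?_⟩
      exact hka (card_le_one.1 hU k (mem_unsaturatedSupport.2 ⟨(hmemS k).1 hk, hlt⟩) a ha)
  have hθ : 0 ≤ θ := (abs_nonneg _).trans (hu k₀)
  have hcard : s ≤ #(S.erase k₀) := by rw [card_erase_of_mem hk₀S]; omega
  have : s * θ < ∑ k, |u k| :=
    calc s * θ ≤ #(S.erase k₀) • θ := by rw [nsmul_eq_mul]; gcongr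
      _ ≤ ∑ k ∈ S.erase k₀, |u k| :=
          card_nsmul_le_sum _ _ _ fun k hk => hk₀ k (mem_of_mem_erase hk) (ne_of_mem_erase hk)
      _ < |u k₀| + ∑ k ∈ S.erase k₀, |u k| := lt_add_of_pos_left _ ((hmemS k₀).1 hk₀S)
      _ = ∑ k ∈ S, |u k| := add_sum_erase S (fun k => |u k|) hk₀S
      _ ≤ ∑ k, |u k| := sum_le_sum_of_subset_of_nonneg (subset_univ S) fun k _ _ => abs_nonneg _
  linarith

theorem mem_convexHull_sparse {s : ℕ} {θ : ℝ} {u : Fin n → ℝ} (hu : ∀ k, |u k| ≤ θ)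
    (hu1 : ∑ k, |u k| ≤ s * θ) :
    u ∈ convexHull ℝ {y | IsSparse s y ∧ (∀ k, u k = 0 → y k = 0) ∧ ∀ k, |y k| ≤ θ} := by
  induction hN : #(unsaturatedSupport θ u) using Nat.strong_induction_on generalizing u with
  | _ N ih =>
  by_cases hs : IsSparse s u
  · exact subset_convexHull ℝ _ ⟨hs, fun k hk => hk, hu⟩
  obtain ⟨i, hi, j, hj, hij⟩ := one_lt_card.1 (one_lt_card_unsaturatedSupport hu hu1 hs)
  obtain ⟨t₁, ht₁, hu₁, hsum₁, hsupp₁, hcard₁⟩ := exists_transfer hu hij hi hj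
  obtain ⟨t₂, ht₂, hu₂, hsum₂, hsupp₂, hcard₂⟩ := exists_transfer hu hij.symm hj hi
  have hmono : ∀ w : Fin n → ℝ, (∀ k, u k = 0 → w k = 0) →
      convexHull ℝ {y | IsSparse s y ∧ (∀ k, w k = 0 → y k = 0) ∧ ∀ k, |y k| ≤ θ} ⊆
        convexHull ℝ {y | IsSparse s y ∧ (∀ k, u k = 0 → y k = 0) ∧ ∀ k, |y k| ≤ θ} :=
    fun w hw => convexHull_mono fun y ⟨hy, hyw, hyθ⟩ => ⟨hy, fun k hk => hyw k (hw k hk), hyθ⟩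
  have h₁ := hmono _ hsupp₁ (ih _ (hN ▸ hcard₁) hu₁ (hsum₁ ▸ hu1) rfl)
  have h₂ := hmono _ hsupp₂ (ih _ (hN ▸ hcard₂) hu₂ (hsum₂ ▸ hu1) rfl)
  have hcomb : (t₂ / (t₁ + t₂)) • transfer u i j t₁ + (t₁ / (t₁ + t₂)) • transfer u j i t₂ = u := by
    ext k
    simp only [transfer, Pi.add_apply, Pi.smul_apply, Pi.sub_apply, smul_eq_mul]
    field_simp
    ring
  have ht : 0 < t₁ + t₂ := add_pos ht₁ ht₂
  have hmem := convex_convexHull ℝ _ h₁ h₂ (div_pos ht₂ ht).le (div_pos ht₁ ht).le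
    (by field_simp; ring)
  rwa [hcomb] at hmem

end SparseRepresentation

lemma exists_finset_forall_sum_le {ι : Type*} [Fintype ι] [DecidableEq ι] (f : ι → ℝ)
    (hf : ∀ i, 0 ≤ f i) (s : ℕ) :
    ∃ S : Finset ι, #S ≤ s ∧ (∀ T : Finset ι, #T ≤ s → ∑ i ∈ T, f i ≤ ∑ i ∈ S, f i) ∧
      ∀ j ∉ S, s * f j ≤ ∑ i ∈ S, f i := by
  obtain ⟨S, hS, hmax⟩ := (powersetCard (min s (Fintype.card ι)) (univ : Finset ι)).exists_max_image
    (fun S => ∑ i ∈ S, f i) (powersetCard_nonempty.2 (by simp))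
  have hSk : #S = min s (Fintype.card ι) := (mem_powersetCard.1 hS).2
  have hmax' : ∀ T : Finset ι, #T = min s (Fintype.card ι) → ∑ i ∈ T, f i ≤ ∑ i ∈ S, f i :=
    fun T hT => hmax T (mem_powersetCard.2 ⟨subset_univ T, hT⟩)
  refine ⟨S, hSk ▸ min_le_left _ _, fun T hT => ?_, fun j hj => ?_⟩
  · obtain ⟨T', hTT', -, hT'⟩ := exists_subsuperset_card_eq (subset_univ T)
      (le_min hT (card_le_univ T)) (min_le_right _ _)
    exact (sum_le_sum_of_subset_of_nonneg hTT' fun i _ _ => hf i).trans (hmax' T' hT')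
  have hSs : #S = s := by
    have := card_lt_univ_of_notMem hj
    omega
  have hswap : ∀ i ∈ S, f j ≤ f i := by
    intro i hi
    have hj' : j ∉ S.erase i := fun h => hj (mem_of_mem_erase h)
    have hS0 : 0 < #S := card_pos.2 ⟨i, hi⟩
    have := hmax' (insert j (S.erase i))
      (by rw [card_insert_of_notMem hj', card_erase_of_mem hi]; omega)
    rw [sum_insert hj', ← add_sum_erase S f hi] at this
    linarith
  calc s * f j = #S • f j := by rw [hSs, nsmul_eq_mul]
    _ ≤ ∑ i ∈ S, f i := card_nsmul_le_sum _ _ _ hswap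

lemma exists_sparse_add_flat {n s : ℕ} (hs : 0 < s) (h : Fin n → ℝ) {T : Finset (Fin n)}
    (hT : #T ≤ s) (hle : ∑ i ∈ Tᶜ, |h i| ≤ ∑ i ∈ T, |h i|) :
    ∃ (x u : Fin n → ℝ) (θ : ℝ), x + u = h ∧ IsSparse s x ∧ (∀ k, u k ≠ 0 → x k = 0) ∧
      (∀ k, |u k| ≤ θ) ∧ ∑ k, |u k| ≤ s * θ ∧ s * θ ^ 2 ≤ ∑ k, x k ^ 2 ∧
      ∑ i ∈ T, |h i| ≤ ∑ k, |x k| := by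
  obtain ⟨T₀, hT₀, hT₀max, hT₀top⟩ :=
    exists_finset_forall_sum_le (fun i => |h i|) (fun i => abs_nonneg _) s
  set θ := (∑ i ∈ T₀, |h i|) / s
  have hsθ : s * θ = ∑ i ∈ T₀, |h i| := mul_div_cancel₀ _ (by positivity)
  refine ⟨fun k => if k ∈ T₀ then h k else 0, fun k => if k ∈ T₀ then 0 else h k, θ,
    funext fun k => by by_cases hk : k ∈ T₀ <;> simp [hk], ⟨T₀, hT₀, fun k hk => if_neg hk⟩,
    fun k hk => if_neg fun hk' => hk (if_pos hk'), fun k => ?_, ?_, ?_, ?_⟩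
  · by_cases hk : k ∈ T₀
    · simp only [if_pos hk, abs_zero]
      positivity
    · simp only [if_neg hk]
      rw [le_div_iff₀ (by positivity)]
      linarith [hT₀top k hk]
  · have : ∑ k, |if k ∈ T₀ then 0 else h k| = ∑ k ∈ T₀ᶜ, |h k| := by
      simp [apply_ite, sum_ite, filter_notMem_eq_sdiff, compl_eq_univ_sdiff]
    beta_reduce
    linarith [sum_add_sum_compl T₀ fun i => |h i|, sum_add_sum_compl T fun i => |h i|, hT₀max T hT]
  · have hCS : (s * θ) ^ 2 ≤ s * ∑ k ∈ T₀, |h k| ^ 2 := by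
      rw [hsθ]
      exact sq_sum_le_card_mul_sum_sq.trans (by gcongr)
    have hx2 : ∑ k, (if k ∈ T₀ then h k else 0) ^ 2 = ∑ k ∈ T₀, |h k| ^ 2 := by simp
    rw [hx2]
    exact le_of_mul_le_mul_left (by linarith) (by positivity : (0 : ℝ) < s)
  · simpa [apply_ite] using hT₀max T hT

lemma eq_zero_of_sum_sq_nonpos {n : ℕ} {z : Fin n → ℝ} (h : ∑ i, z i ^ 2 ≤ 0) : z = 0 := by
  rw [← dotProduct_self_eq_zero]
  simp only [dotProduct, ← sq]
  exact le_antisymm h (sum_nonneg fun i _ => sq_nonneg _)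

lemma exists_pos_weight {δ : ℝ} (hδ0 : 0 ≤ δ) (hδ : δ < 1 / Real.sqrt 2) :
    ∃ μ : ℝ, 0 < 1 - δ - (1 + δ) * (2 * μ - 1) ^ 2 - 2 * δ * μ ^ 2 := by
  have hδ2 : δ ^ 2 < 1 / 2 := by
    simpa [div_pow] using pow_lt_pow_left₀ hδ hδ0 two_ne_zero
  have h : 0 < 2 + 3 * δ := by linarith
  refine ⟨(1 + δ) / (2 + 3 * δ), ?_⟩
  calc 0 < (2 - 4 * δ ^ 2) / (2 + 3 * δ) := div_pos (by linarith) h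
    _ = _ := by field_simp; ring

def HasRIP {m n : ℕ} (A : Matrix (Fin m) (Fin n) ℝ) (k : ℕ) (δ : ℝ) : Prop :=
  ∀ z : Fin n → ℝ, IsSparse k z →
    (1 - δ) * ∑ i, z i ^ 2 ≤ ∑ i, (A *ᵥ z) i ^ 2 ∧ ∑ i, (A *ᵥ z) i ^ 2 ≤ (1 + δ) * ∑ i, z i ^ 2

namespace HasRIP

variable {m n : ℕ} {A : Matrix (Fin m) (Fin n) ℝ} {k s : ℕ} {δ : ℝ}

lemma mono (hA : HasRIP A k δ) {δ' : ℝ} (hδ : δ ≤ δ') : HasRIP A k δ' := fun z hz => by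
  have hz0 : 0 ≤ ∑ i, z i ^ 2 := sum_nonneg fun i _ => sq_nonneg _
  obtain ⟨hlow, hup⟩ := hA z hz
  constructor <;> nlinarith

lemma eq_zero_of_mulVec_eq_zero (hA : HasRIP A k δ) (hδ : δ < 1) {z : Fin n → ℝ}
    (hz : IsSparse k z) (hAz : A *ᵥ z = 0) : z = 0 := by
  have hlow := (hA z hz).1
  simp only [hAz, Pi.zero_apply, ne_eq, OfNat.ofNat_ne_zero, not_false_eq_true, zero_pow,
    sum_const_zero] at hlow
  exact eq_zero_of_sum_sq_nonpos (nonpos_of_mul_nonpos_right hlow (sub_pos.2 hδ))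

lemma mul_sum_sq_le_dotProduct (hA : HasRIP A (2 * s) δ) (hδ0 : 0 ≤ δ) {x y : Fin n → ℝ}
    (hx : IsSparse s x) (hy : IsSparse s y) (hxy : ∀ k, x k * y k = 0)
    (hyx : ∑ k, y k ^ 2 ≤ ∑ k, x k ^ 2) (μ : ℝ) :
    (1 - δ - (1 + δ) * (2 * μ - 1) ^ 2 - 2 * δ * μ ^ 2) * ∑ k, x k ^ 2 ≤
      4 * μ * (1 - μ) * ((A *ᵥ x) ⬝ᵥ (A *ᵥ (x + y))) := by
  have hsparse : ∀ a : ℝ, IsSparse (2 * s) (a • x + μ • y) :=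
    fun a => two_mul s ▸ (hx.smul a).add (hy.smul μ)
  have hnorm : ∀ a : ℝ, ∑ k, (a • x + μ • y) k ^ 2 = a ^ 2 * ∑ k, x k ^ 2 + μ ^ 2 * ∑ k, y k ^ 2 :=
    fun a => by
      simp only [Pi.add_apply, Pi.smul_apply, smul_eq_mul, mul_sum, ← sum_add_distrib]
      exact sum_congr rfl fun k _ => by linear_combination (2 * a * μ) * hxy k
  have hlow := (hA _ (hsparse 1)).1
  have hup := (hA _ (hsparse (2 * μ - 1))).2
  rw [hnorm] at hlow hup
  -- the terms `μ ^ 2 * ‖A y‖²` cancel, which leaves an affine function of `y`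
  have hid : ∑ i, (A *ᵥ ((1 : ℝ) • x + μ • y)) i ^ 2 - ∑ i, (A *ᵥ ((2 * μ - 1) • x + μ • y)) i ^ 2 =
      4 * μ * (1 - μ) * ((A *ᵥ x) ⬝ᵥ (A *ᵥ (x + y))) := by
    simp only [mulVec_add, mulVec_smul, dotProduct, Pi.add_apply, Pi.smul_apply, smul_eq_mul,
      ← sum_sub_distrib, mul_sum]
    exact sum_congr rfl fun i _ => by ring
  nlinarith [mul_le_mul_of_nonneg_left hyx (by positivity : 0 ≤ 2 * δ * μ ^ 2)]

theorem eq_zero_of_mulVec_add_eq_zero (hA : HasRIP A (2 * s) δ) (hδ0 : 0 ≤ δ)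
    (hδ : δ < 1 / Real.sqrt 2) {x u : Fin n → ℝ} {θ : ℝ} (hx : IsSparse s x)
    (hxu : ∀ k, u k ≠ 0 → x k = 0) (hu : ∀ k, |u k| ≤ θ) (hu1 : ∑ k, |u k| ≤ s * θ)
    (hθ : s * θ ^ 2 ≤ ∑ k, x k ^ 2) (hAxu : A *ᵥ (x + u) = 0) : x = 0 := by
  obtain ⟨μ, hc⟩ := exists_pos_weight hδ0 hδ
  set ℓ : (Fin n → ℝ) →ₗ[ℝ] ℝ := (4 * μ * (1 - μ)) • (dotProductBilin ℝ ℝ (A *ᵥ x) ∘ₗ A.mulVecLin)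
  have hℓ : ∀ y, ℓ y = 4 * μ * (1 - μ) * ((A *ᵥ x) ⬝ᵥ (A *ᵥ y)) := fun y => rfl
  set r := (1 - δ - (1 + δ) * (2 * μ - 1) ^ 2 - 2 * δ * μ ^ 2) * ∑ k, x k ^ 2 -
    4 * μ * (1 - μ) * ((A *ᵥ x) ⬝ᵥ (A *ᵥ x))
  have hS : {y | IsSparse s y ∧ (∀ k, u k = 0 → y k = 0) ∧ ∀ k, |y k| ≤ θ} ⊆ {y | r ≤ ℓ y} := by
    rintro y ⟨hy, hyu, hyθ⟩
    have hxy : ∀ k, x k * y k = 0 := fun k => by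
      by_cases hk : u k = 0
      · rw [hyu k hk, mul_zero]
      · rw [hxu k hk, zero_mul]
    have := hA.mul_sum_sq_le_dotProduct hδ0 hx hy hxy ((hy.sum_sq_le hyθ).trans hθ) μ
    rw [mulVec_add, dotProduct_add] at this
    simp only [Set.mem_ofPred_eq, hℓ, r]
    linarith
  have hu_mem := convexHull_min hS (convex_halfSpace_ge ℓ.isLinear r) (mem_convexHull_sparse hu hu1)
  have hxx : (A *ᵥ x) ⬝ᵥ (A *ᵥ x) + (A *ᵥ x) ⬝ᵥ (A *ᵥ u) = 0 := by
    rw [← dotProduct_add, ← mulVec_add, hAxu, dotProduct_zero]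
  simp only [Set.mem_ofPred_eq, hℓ, r] at hu_mem
  exact eq_zero_of_sum_sq_nonpos (nonpos_of_mul_nonpos_right (by nlinarith) hc)

theorem sum_abs_lt_sum_abs_compl (hA : HasRIP A (2 * s) δ) (hδ0 : 0 ≤ δ)
    (hδ : δ < 1 / Real.sqrt 2) {h : Fin n → ℝ} (hAh : A *ᵥ h = 0) (hh : h ≠ 0)
    {T : Finset (Fin n)} (hT : #T ≤ s) : ∑ i ∈ T, |h i| < ∑ i ∈ Tᶜ, |h i| := by
  have hpos : 0 < ∑ i, |h i| := by
    obtain ⟨i, hi⟩ := Function.ne_iff.1 hh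
    exact sum_pos' (fun i _ => abs_nonneg _) ⟨i, mem_univ i, abs_pos.2 hi⟩
  have hsplit := sum_add_sum_compl T fun i => |h i|
  rcases Nat.eq_zero_or_pos s with rfl | hs
  · rw [card_eq_zero.1 (Nat.le_zero.1 hT), sum_empty] at hsplit ⊢
    linarith
  by_contra hle
  push Not at hle
  obtain ⟨x, u, θ, hxuh, hx, hxu, hu, hu1, hθ, hTx⟩ := exists_sparse_add_flat hs h hT hle
  rw [hA.eq_zero_of_mulVec_add_eq_zero hδ0 hδ hx hxu hu hu1 hθ (hxuh ▸ hAh)] at hTx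
  simp only [Pi.zero_apply, abs_zero, sum_const_zero] at hTx
  linarith

end HasRIP

theorem exists_lt_one_forall_le_mul {E : Type*} [NormedAddCommGroup E] [NormedSpace ℝ E]
    [FiniteDimensional ℝ E] {f p : E → ℝ} (hf : Continuous f) (hp : Continuous p)
    (hf_smul : ∀ (c : ℝ) x, 0 ≤ c → f (c • x) = c * f x)
    (hp_smul : ∀ (c : ℝ) x, 0 ≤ c → p (c • x) = c * p x)
    (hf0 : ∀ x, 0 ≤ f x) (hlt : ∀ x, x ≠ 0 → f x < p x) :
    ∃ κ, 0 ≤ κ ∧ κ < 1 ∧ ∀ x, f x ≤ κ * p x := by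
  have hzero : ∀ g : E → ℝ, (∀ (c : ℝ) x, 0 ≤ c → g (c • x) = c * g x) → g 0 = 0 :=
    fun g hg => by simpa using hg 0 0 le_rfl
  rcases subsingleton_or_nontrivial E with hE | hE
  · exact ⟨0, le_rfl, one_pos, fun x => by simp [Subsingleton.elim x 0, hzero f hf_smul]⟩
  have hp_pos : ∀ x ∈ Metric.sphere (0 : E) 1, 0 < p x :=
    fun x hx => (hf0 x).trans_lt (hlt x (Metric.ne_of_mem_sphere hx one_ne_zero))
  obtain ⟨x₀, hx₀, hmax⟩ := (isCompact_sphere (0 : E) 1).exists_isMaxOn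
    (NormedSpace.sphere_nonempty.2 zero_le_one)
    (hf.continuousOn.div hp.continuousOn fun x hx => (hp_pos x hx).ne')
  refine ⟨f x₀ / p x₀, div_nonneg (hf0 _) (hp_pos _ hx₀).le,
    (div_lt_one (hp_pos _ hx₀)).2 (hlt _ (Metric.ne_of_mem_sphere hx₀ one_ne_zero)), fun x => ?_⟩
  rcases eq_or_ne x 0 with rfl | hx
  · simp [hzero f hf_smul, hzero p hp_smul]
  have hx' : ‖x‖⁻¹ • x ∈ Metric.sphere (0 : E) 1 := by simp [norm_smul, hx]
  have hle : f (‖x‖⁻¹ • x) ≤ f x₀ / p x₀ * p (‖x‖⁻¹ • x) :=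
    (div_le_iff₀ (hp_pos _ hx')).1 (hmax hx')
  have hscale : ∀ g : E → ℝ, (∀ (c : ℝ) x, 0 ≤ c → g (c • x) = c * g x) →
      g x = ‖x‖ * g (‖x‖⁻¹ • x) := fun g hg => by
    rw [← hg _ _ (norm_nonneg x), smul_inv_smul₀ (norm_ne_zero_iff.2 hx)]
  rw [hscale f hf_smul, hscale p hp_smul]
  nlinarith [norm_nonneg x]

theorem exists_transpose_mulVec_eq {m n : ℕ} (A : Matrix (Fin m) (Fin n) ℝ) (η : Fin n → ℝ)
    (hη : ∀ h, A *ᵥ h = 0 → η ⬝ᵥ h = 0) : ∃ w, Aᵀ *ᵥ w = η := by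
  have hmem : dotProductBilin ℝ ℝ η ∈ LinearMap.range A.mulVecLin.dualMap := by
    rw [LinearMap.range_dualMap_eq_dualAnnihilator_ker, Submodule.mem_dualAnnihilator]
    exact hη
  obtain ⟨ψ, hψ⟩ := hmem
  refine ⟨fun j => ψ fun k => if j = k then 1 else 0, funext fun i => ?_⟩
  have hψi := LinearMap.congr_fun hψ (Pi.single i 1)
  rw [LinearMap.dualMap_apply, LinearMap.pi_apply_eq_sum_univ ψ] at hψi
  simp only [mulVecLin_apply, mulVec_single_one, col_apply, smul_eq_mul,
    dotProductBilin_apply_apply, dotProduct_single_one] at hψi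
  rw [← hψi, mulVec_transpose]
  simp only [vecMul, dotProduct, mul_comm]

theorem exists_dotProduct_eq_of_abs_le {n : ℕ} (K : Submodule ℝ (Fin n → ℝ)) (φ : Fin n → ℝ)
    (T : Finset (Fin n)) {κ : ℝ} (hκ : 0 ≤ κ) (hφ : ∀ h ∈ K, |φ ⬝ᵥ h| ≤ κ * ∑ i ∈ Tᶜ, |h i|) :
    ∃ ζ : Fin n → ℝ, (∀ h ∈ K, ζ ⬝ᵥ h = φ ⬝ᵥ h) ∧ (∀ i ∈ T, ζ i = 0) ∧ ∀ i, |ζ i| ≤ κ := by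
  obtain ⟨g, hgK, hg⟩ := exists_extension_of_le_sublinear
    ⟨K, (dotProductBilin ℝ ℝ φ).domRestrict K⟩ (fun x => κ * ∑ i ∈ Tᶜ, |x i|)
    (fun c hc x => by
      simp only [Pi.smul_apply, smul_eq_mul, abs_mul, abs_of_pos hc, ← mul_sum]
      ring)
    (fun x y => by
      rw [← mul_add, ← sum_add_distrib]
      exact mul_le_mul_of_nonneg_left (sum_le_sum fun i _ => abs_add_le _ _) hκ)
    (fun h => (le_abs_self _).trans (hφ h h.2))
  have hg_abs : ∀ x, |g x| ≤ κ * ∑ i ∈ Tᶜ, |x i| := fun x => by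
    have := hg (-x)
    simp only [map_neg, Pi.neg_apply, abs_neg] at this
    exact abs_le.2 ⟨by linarith, hg x⟩
  have hg_single : ∀ i, |g (Pi.single i 1)| ≤ if i ∈ T then 0 else κ := fun i => by
    simpa [Pi.single_apply, apply_ite] using hg_abs (Pi.single i 1)
  refine ⟨fun i => g (Pi.single i 1), fun h hh => ?_, fun i hi => ?_, fun i => ?_⟩
  · rw [← show g h = φ ⬝ᵥ h from hgK ⟨h, hh⟩]
    conv_rhs => rw [← univ_sum_single h]
    simp only [map_sum, dotProduct]
    refine sum_congr rfl fun i _ => ?_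
    rw [mul_comm, ← smul_eq_mul, ← map_smul, ← Pi.single_smul, smul_eq_mul, mul_one]
  · simpa [hi] using hg_single i
  · exact (hg_single i).trans (by split_ifs <;> simp [hκ])

theorem exists_dual_certificate {m n : ℕ} (A : Matrix (Fin m) (Fin n) ℝ) (T : Finset (Fin n))
    (σ : Fin n → ℝ) (hσ : ∀ i ∈ T, |σ i| ≤ 1)
    (hnsp : ∀ h, A *ᵥ h = 0 → h ≠ 0 → ∑ i ∈ T, |h i| < ∑ i ∈ Tᶜ, |h i|) :
    ∃ w, (∀ i ∈ T, (Aᵀ *ᵥ w) i = σ i) ∧ ∀ i ∉ T, |(Aᵀ *ᵥ w) i| < 1 := by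
  set τ : Fin n → ℝ := fun i => if i ∈ T then σ i else 0
  set K := LinearMap.ker A.mulVecLin
  have hτ : ∀ h, |τ ⬝ᵥ h| ≤ ∑ i ∈ T, |h i| := fun h => by
    simp only [τ, dotProduct, ite_mul, zero_mul, sum_ite_mem, univ_inter]
    refine (abs_sum_le_sum_abs _ _).trans (sum_le_sum fun i hi => ?_)
    rw [abs_mul]
    exact mul_le_of_le_one_left (abs_nonneg _) (hσ i hi)
  obtain ⟨κ, hκ0, hκ1, hκ⟩ := exists_lt_one_forall_le_mul (E := K)
    (f := fun h => |τ ⬝ᵥ (h : Fin n → ℝ)|) (p := fun h => ∑ i ∈ Tᶜ, |(h : Fin n → ℝ) i|)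
    (by fun_prop)
    (continuous_finsetSum _ fun i _ => ((continuous_apply i).comp continuous_subtype_val).abs)
    (fun c h hc => by simp [dotProduct_smul, abs_mul, abs_of_nonneg hc])
    (fun c h hc => by simp [abs_mul, abs_of_nonneg hc, mul_sum]) (fun _ => abs_nonneg _)
    (fun h hh => (hτ h).trans_lt (hnsp h h.2 (by simpa using hh)))
  obtain ⟨ζ, hζK, hζT, hζ⟩ := exists_dotProduct_eq_of_abs_le K (-τ) T hκ0
    fun h hh => by simpa using hκ ⟨h, hh⟩
  obtain ⟨w, hw⟩ := exists_transpose_mulVec_eq A (τ + ζ) fun h hh => by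
    rw [add_dotProduct, hζK h hh, neg_dotProduct, add_neg_cancel]
  refine ⟨w, fun i hi => by simp [hw, τ, hi, hζT i hi], fun i hi => ?_⟩
  simpa [hw, τ, hi] using (hζ i).trans_lt hκ1

lemma Real.abs_sign_le_one (t : ℝ) : |Real.sign t| ≤ 1 := by
  rcases Real.sign_apply_eq t with h | h | h <;> simp [h]

/-- The RIP of order `2s` with constant `δ < 1/√2` implies, for every `s`-sparse vector `v`,
the source condition and injectivity of `A` restricted to the support of `v`. -/
theorem stmt3 {m n : ℕ} (s : ℕ) (A : Matrix (Fin m) (Fin n) ℝ) (δ : ℝ)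
    (hδ : δ < 1 / Real.sqrt 2)
    (hRIP : ∀ z : Fin n → ℝ, IsSparse (2 * s) z →
      (1 - δ) * ∑ i, z i ^ 2 ≤ ∑ i, (A *ᵥ z) i ^ 2 ∧
      ∑ i, (A *ᵥ z) i ^ 2 ≤ (1 + δ) * ∑ i, z i ^ 2) :
    ∀ v : Fin n → ℝ, IsSparse s v →
      (∃ w : Fin m → ℝ,
        (∀ i, v i ≠ 0 → (Aᵀ *ᵥ w) i = Real.sign (v i)) ∧
        (∀ i, v i = 0 → |(Aᵀ *ᵥ w) i| < 1)) ∧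
      (∀ z₁ z₂ : Fin n → ℝ, (∀ i, v i = 0 → z₁ i = 0) →
        (∀ i, v i = 0 → z₂ i = 0) → A *ᵥ z₁ = A *ᵥ z₂ → z₁ = z₂) := by
  intro v hv
  set T : Finset (Fin n) := {i | v i ≠ 0}
  have hT : #T ≤ s := isSparse_iff.1 hv
  have hmemT : ∀ i, i ∉ T ↔ v i = 0 := by simp [T]
  refine ⟨?_, fun z₁ z₂ h₁ h₂ hz => ?_⟩
  · have hRIP' : HasRIP A (2 * s) (max δ 0) := HasRIP.mono hRIP (le_max_left δ 0)
    obtain ⟨w, hwT, hwTc⟩ := exists_dual_certificate A T (fun i => Real.sign (v i))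
      (fun i _ => Real.abs_sign_le_one _) fun h hAh hh =>
        hRIP'.sum_abs_lt_sum_abs_compl (le_max_right δ 0) (max_lt hδ (by positivity)) hAh hh hT
    exact ⟨w, fun i hi => hwT i (by simpa [T] using hi), fun i hi => hwTc i ((hmemT i).2 hi)⟩
  · have hδ1 : δ < 1 := hδ.trans ((div_lt_one (by positivity)).2 Real.one_lt_sqrt_two)
    have hsparse : IsSparse (2 * s) (z₁ - z₂) :=
      ⟨T, by omega, fun i hi => by simp [h₁ i ((hmemT i).1 hi), h₂ i ((hmemT i).1 hi)]⟩
    exact sub_eq_zero.1 <|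
      HasRIP.eq_zero_of_mulVec_eq_zero hRIP hδ1 hsparse (by rw [mulVec_sub, hz, sub_self])
end

section
/- Let A ∈ ℝ^{m×n}, let R : ℝⁿ → [0,∞) be continuous and coercive (i.e., R(f) → ∞ as ‖f‖₂ → ∞), let g ∈ ℝ^m, and suppose the equation Af = g has a solution. Let (δ_k) be a sequence of positive numbers converging to 0, let λ : (0,∞) → (0,∞) be a parameter choice with λ(δ) → 0 and δ²/λ(δ) → 0 as δ → 0, let g_k ∈ ℝ^m satisfy ‖g_k − g‖₂ ≤ δ_k, and let f_k be a minimizer of f ↦ (1/2)‖Af − g_k‖₂² + (λ(δ_k)/2) R(f). Then (f_k) has a convergent subsequence, and the limit of every convergent subsequence is an R-minimizing solution of Af = g, i.e., a solution f* of Af* = g with R(f*) ≤ R(f) for every f with Af = g. -/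
open Matrix Filter

/-- The Euclidean (ℓ²) norm on `Fin k → ℝ`. -/
noncomputable def l2norm {k : ℕ} (x : Fin k → ℝ) : ℝ := Real.sqrt (∑ i, x i ^ 2)


lemma l2norm_nonneg {k : ℕ} (x : Fin k → ℝ) : 0 ≤ l2norm x := Real.sqrt_nonneg _

lemma l2norm_sq {k : ℕ} (x : Fin k → ℝ) : l2norm x ^ 2 = ∑ i, x i ^ 2 :=
  Real.sq_sqrt (Finset.sum_nonneg fun i _ => sq_nonneg _)

lemma norm_le_l2norm {k : ℕ} (x : Fin k → ℝ) : ‖x‖ ≤ l2norm x := by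
  rw [pi_norm_le_iff_of_nonneg (l2norm_nonneg x)]
  intro i
  have h1 : x i ^ 2 ≤ ∑ j, x j ^ 2 :=
    Finset.single_le_sum (fun j _ => sq_nonneg (x j)) (Finset.mem_univ i)
  calc ‖x i‖ = Real.sqrt (x i ^ 2) := by
        rw [Real.sqrt_sq_eq_abs, Real.norm_eq_abs]
    _ ≤ l2norm x := Real.sqrt_le_sqrt h1

lemma l2norm_neg {k : ℕ} (x : Fin k → ℝ) : l2norm (-x) = l2norm x := by
  unfold l2norm; congr 1; apply Finset.sum_congr rfl; intro i _
  simp [neg_sq]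


/-- Convergence of NETT regularization: with noise levels `δ_k → 0`, a parameter choice
`λ(δ) → 0`, `δ²/λ(δ) → 0`, data `‖g_k - g‖₂ ≤ δ_k` and minimizers `f_k` of the NETT
functional, `(f_k)` has a convergent subsequence and every subsequential limit is an
`R`-minimizing solution of `A f = g`. -/
theorem stmt10 {m n : ℕ} (A : Matrix (Fin m) (Fin n) ℝ)
    (R : (Fin n → ℝ) → ℝ) (hRnonneg : ∀ f, 0 ≤ R f) (hRcont : Continuous R)
    (hRcoercive : ∀ M : ℝ, ∃ K : ℝ, ∀ f : Fin n → ℝ, K ≤ l2norm f → M ≤ R f)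
    (g : Fin m → ℝ) (hsol : ∃ f : Fin n → ℝ, A *ᵥ f = g)
    (δs : ℕ → ℝ) (hδpos : ∀ k, 0 < δs k) (hδ0 : Tendsto δs atTop (nhds 0))
    (lam : ℝ → ℝ) (hlampos : ∀ δ : ℝ, 0 < δ → 0 < lam δ)
    (hlam0 : Tendsto lam (nhdsWithin 0 (Set.Ioi 0)) (nhds 0))
    (hquot0 : Tendsto (fun δ : ℝ => δ ^ 2 / lam δ) (nhdsWithin 0 (Set.Ioi 0)) (nhds 0))
    (gs : ℕ → Fin m → ℝ) (hgs : ∀ k, l2norm (gs k - g) ≤ δs k)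
    (fs : ℕ → Fin n → ℝ)
    (hfs : ∀ k : ℕ, ∀ f : Fin n → ℝ,
      (1 / 2) * l2norm (A *ᵥ fs k - gs k) ^ 2 + (lam (δs k) / 2) * R (fs k) ≤
        (1 / 2) * l2norm (A *ᵥ f - gs k) ^ 2 + (lam (δs k) / 2) * R f) :
    (∃ φ : ℕ → ℕ, StrictMono φ ∧
      ∃ fstar : Fin n → ℝ, Tendsto (fs ∘ φ) atTop (nhds fstar)) ∧
    (∀ φ : ℕ → ℕ, StrictMono φ → ∀ fstar : Fin n → ℝ,
      Tendsto (fs ∘ φ) atTop (nhds fstar) →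
      A *ᵥ fstar = g ∧ ∀ f : Fin n → ℝ, A *ᵥ f = g → R fstar ≤ R f) := by
  obtain ⟨f0, hf0⟩ := hsol
  have hlpos : ∀ k, 0 < lam (δs k) := fun k => hlampos _ (hδpos k)
  -- δs tends to 0 within (0,∞)
  have hδin : Tendsto δs atTop (nhdsWithin 0 (Set.Ioi 0)) :=
    tendsto_nhdsWithin_iff.mpr ⟨hδ0, Eventually.of_forall fun k => hδpos k⟩
  have hlamk : Tendsto (fun k => lam (δs k)) atTop (nhds 0) := hlam0.comp hδin
  have hquotk : Tendsto (fun k => δs k ^ 2 / lam (δs k)) atTop (nhds 0) := hquot0.comp hδin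
  -- key inequalities
  have hkey : ∀ f : Fin n → ℝ, A *ᵥ f = g → ∀ k : ℕ,
      R (fs k) ≤ δs k ^ 2 / lam (δs k) + R f ∧
      l2norm (A *ᵥ fs k - gs k) ^ 2 ≤ δs k ^ 2 + lam (δs k) * R f := by
    intro f hf k
    have hmain := hfs k f
    have heq : A *ᵥ f - gs k = -(gs k - g) := by rw [hf]; abel
    have hfb : l2norm (A *ᵥ f - gs k) ≤ δs k := by
      rw [heq, l2norm_neg]; exact hgs k
    have hfb2 : l2norm (A *ᵥ f - gs k) ^ 2 ≤ δs k ^ 2 :=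
      pow_le_pow_left₀ (l2norm_nonneg _) hfb 2
    have hL : 0 ≤ l2norm (A *ᵥ fs k - gs k) ^ 2 := sq_nonneg _
    have hRk := hRnonneg (fs k)
    have hl := hlpos k
    constructor
    · have h1 : R (fs k) - R f ≤ δs k ^ 2 / lam (δs k) := by
        rw [le_div_iff₀ hl]
        nlinarith
      linarith
    · nlinarith
  -- boundedness of R (fs k)
  obtain ⟨C, hC⟩ : ∃ C : ℝ, ∀ k, δs k ^ 2 / lam (δs k) ≤ C := by
    obtain ⟨C, hC⟩ := hquotk.bddAbove_range
    exact ⟨C, fun k => hC ⟨k, rfl⟩⟩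
  have hRb : ∀ k, R (fs k) ≤ C + R f0 := fun k =>
    le_trans (hkey f0 hf0 k).1 (by linarith [hC k])
  obtain ⟨K, hK⟩ := hRcoercive (C + R f0 + 1)
  have hfsb : ∀ k, ‖fs k‖ ≤ |K| := by
    intro k
    have h1 : l2norm (fs k) < K := by
      by_contra h
      push_neg at h
      have := hK (fs k) h
      linarith [hRb k]
    calc ‖fs k‖ ≤ l2norm (fs k) := norm_le_l2norm _
      _ ≤ |K| := le_trans h1.le (le_abs_self K)
  -- Bolzano-Weierstrass
  have hmem : ∀ k, fs k ∈ Metric.closedBall (0 : Fin n → ℝ) |K| := by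
    intro k
    rw [Metric.mem_closedBall, dist_zero_right]
    exact hfsb k
  obtain ⟨fstar, _, φ, hφ, hconv⟩ :=
    (isCompact_closedBall (0 : Fin n → ℝ) |K|).tendsto_subseq hmem
  refine ⟨⟨φ, hφ, fstar, hconv⟩, ?_⟩
  intro φ hφ fstar hconv
  have hφtop : Tendsto φ atTop atTop := hφ.tendsto_atTop
  have hδφ : Tendsto (fun k => δs (φ k)) atTop (nhds 0) := hδ0.comp hφtop
  have hlamφ : Tendsto (fun k => lam (δs (φ k))) atTop (nhds 0) := hlamk.comp hφtop
  have hquotφ : Tendsto (fun k => δs (φ k) ^ 2 / lam (δs (φ k))) atTop (nhds 0) :=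
    hquotk.comp hφtop
  have hcontA : Continuous (fun x : Fin n → ℝ => A *ᵥ x) :=
    LinearMap.continuous_of_finiteDimensional A.mulVecLin
  have hA : Tendsto (fun k => A *ᵥ fs (φ k)) atTop (nhds (A *ᵥ fstar)) :=
    (hcontA.tendsto fstar).comp hconv
  -- gs (φ k) → g
  have hgφ : Tendsto (fun k => gs (φ k)) atTop (nhds g) := by
    rw [tendsto_iff_norm_sub_tendsto_zero]
    refine squeeze_zero (fun k => norm_nonneg _) (fun k => ?_) hδφ
    exact le_trans (norm_le_l2norm _) (hgs (φ k))
  -- residual squared → 0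
  have hres2 : Tendsto (fun k => l2norm (A *ᵥ fs (φ k) - gs (φ k)) ^ 2) atTop (nhds 0) := by
    have hub : Tendsto (fun k => δs (φ k) ^ 2 + lam (δs (φ k)) * R f0) atTop (nhds 0) := by
      have h1 : Tendsto (fun k => δs (φ k) ^ 2) atTop (nhds 0) := by
        simpa using hδφ.pow 2
      have h2 : Tendsto (fun k => lam (δs (φ k)) * R f0) atTop (nhds 0) := by
        simpa using hlamφ.mul_const (R f0)
      simpa using h1.add h2
    exact squeeze_zero (fun k => sq_nonneg _) (fun k => (hkey f0 hf0 (φ k)).2) hub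
  have hres : Tendsto (fun k => l2norm (A *ᵥ fs (φ k) - gs (φ k))) atTop (nhds 0) := by
    have h := (Real.continuous_sqrt.tendsto 0).comp hres2
    have heq : (fun k => l2norm (A *ᵥ fs (φ k) - gs (φ k))) =
        (fun x => Real.sqrt x) ∘ (fun k => l2norm (A *ᵥ fs (φ k) - gs (φ k)) ^ 2) := by
      funext k
      simp [Function.comp, Real.sqrt_sq (l2norm_nonneg _)]
    rw [heq]
    simpa using h
  have hdiff : Tendsto (fun k => A *ᵥ fs (φ k) - gs (φ k)) atTop (nhds 0) := by
    rw [tendsto_zero_iff_norm_tendsto_zero]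
    exact squeeze_zero (fun k => norm_nonneg _) (fun k => norm_le_l2norm _) hres
  have hA' : Tendsto (fun k => A *ᵥ fs (φ k)) atTop (nhds g) := by
    have := hdiff.add hgφ
    simpa using this
  have hAfstar : A *ᵥ fstar = g := tendsto_nhds_unique hA hA'
  refine ⟨hAfstar, ?_⟩
  intro f hf
  have hRφ : Tendsto (fun k => R (fs (φ k))) atTop (nhds (R fstar)) :=
    (hRcont.tendsto fstar).comp hconv
  have hub : Tendsto (fun k => δs (φ k) ^ 2 / lam (δs (φ k)) + R f) atTop (nhds (R f)) := by
    simpa using hquotφ.add_const (R f)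
  exact le_of_tendsto_of_tendsto' hRφ hub (fun k => (hkey f hf (φ k)).1)
end
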